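/- arXiv:2509.26610 — 2 statements merged into one kernel-verified Lean document; each statement's English description precedes it below -/
import Mathlib

section
/- For a Gaussian distribution P = N(μ, σ²) with σ > 0 and any real y, the continuous ranked probability score CRPS(P, y) = ∫_ℝ (F_P(t) − 1{y ≤ t})² dt equals σ(2φ(z) + z(2Φ(z) − 1) − 1/√π), where z = (y − μ)/σ. -/
/-!
The substitution `t = μ + σ s` reduces the score to the standard case, multiplied by `σ`.
There, splitting the line at `z`, the integrand is `Φ²` below `z` and `(1 - Φ)²` above it, and
`Φ(-s) = 1 - Φ(s)` turns both pieces into upper-tail integrals of `(1 - Φ)²`. This function has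
the explicit antiderivative
`G(s) = s (1 - Φ(s))² - 2 (1 - Φ(s)) φ(s) + (1 - Φ(√2 s)) / √π`,
which vanishes at `+∞` by the Mills bound `s (1 - Φ(s)) ≤ φ(s)`; the last term of `G` is there
because `2 φ(s)² = √2 φ(√2 s) / √π`. Hence the score is `-G(z) - G(-z)`.
-/

open MeasureTheory Real

/-- standard normal density -/
noncomputable def stdGaussPDF (t : ℝ) : ℝ := (Real.sqrt (2 * Real.pi))⁻¹ * Real.exp (-(t ^ 2) / 2)

/-- standard normal cumulative distribution function -/
noncomputable def stdGaussCDF (z : ℝ) : ℝ := ∫ t in Set.Iio z, stdGaussPDF t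

open Filter Set ProbabilityTheory Topology

noncomputable def crps (F : ℝ → ℝ) (y : ℝ) : ℝ :=
  ∫ t, (F t - if y ≤ t then 1 else 0) ^ 2

lemma crps_comp_affine (F : ℝ → ℝ) (μ y : ℝ) {σ : ℝ} (hσ : 0 < σ) :
    crps (fun t => F ((t - μ) / σ)) y = σ * crps F ((y - μ) / σ) := by
  set g := fun s => (F s - if (y - μ) / σ ≤ s then 1 else 0) ^ 2
  have hg : ∀ t, (F ((t - μ) / σ) - if y ≤ t then 1 else 0) ^ 2 = g ((t - μ) / σ) := by
    intro t
    simp only [g, div_le_div_iff_of_pos_right hσ, sub_le_sub_iff_right]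
  calc crps (fun t => F ((t - μ) / σ)) y = ∫ t, g ((t - μ) / σ) := by
        simp only [crps, hg]
    _ = ∫ t, g (t / σ) := integral_sub_right_eq_self (fun t => g (t / σ)) μ
    _ = σ * crps F ((y - μ) / σ) := by
        rw [Measure.integral_comp_div, abs_of_pos hσ, smul_eq_mul, crps]

lemma crps_eq_integral_Iio_add_integral_Ioi {F : ℝ → ℝ} {y : ℝ}
    (hlow : IntegrableOn (fun t => F t ^ 2) (Iio y))
    (hupp : IntegrableOn (fun t => (1 - F t) ^ 2) (Ioi y)) :
    crps F y = (∫ t in Iio y, F t ^ 2) + ∫ t in Ioi y, (1 - F t) ^ 2 := by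
  set g := fun t => (F t - if y ≤ t then 1 else 0) ^ 2
  have hg_low : EqOn g (fun t => F t ^ 2) (Iio y) := fun t ht => by
    simp [g, not_le.mpr (mem_Iio.mp ht)]
  have hg_upp : EqOn g (fun t => (1 - F t) ^ 2) (Ici y) := fun t ht => by
    simp only [g, if_pos (mem_Ici.mp ht)]; ring
  rw [crps, ← intervalIntegral.integral_Iio_add_Ici (b := y)
    (hlow.congr_fun hg_low.symm measurableSet_Iio)
    (((integrableOn_Ici_iff_integrableOn_Ioi).2 hupp).congr_fun hg_upp.symm measurableSet_Ici),
    setIntegral_congr_fun measurableSet_Iio hg_low, setIntegral_congr_fun measurableSet_Ici hg_upp,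
    setIntegral_congr_set Ioi_ae_eq_Ici]

lemma stdGaussPDF_eq_gaussianPDFReal : stdGaussPDF = gaussianPDFReal 0 1 := by
  ext t
  simp [stdGaussPDF, gaussianPDFReal]

lemma continuous_stdGaussPDF : Continuous stdGaussPDF := by
  unfold stdGaussPDF; fun_prop

lemma stdGaussPDF_nonneg (t : ℝ) : 0 ≤ stdGaussPDF t := by
  unfold stdGaussPDF; positivity

lemma stdGaussPDF_neg (t : ℝ) : stdGaussPDF (-t) = stdGaussPDF t := by
  simp [stdGaussPDF]

lemma integrable_stdGaussPDF : Integrable stdGaussPDF :=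
  stdGaussPDF_eq_gaussianPDFReal ▸ integrable_gaussianPDFReal 0 1

lemma integral_stdGaussPDF : ∫ t, stdGaussPDF t = 1 := by
  simp [stdGaussPDF_eq_gaussianPDFReal, integral_gaussianPDFReal_eq_one]

lemma hasDerivAt_stdGaussPDF (t : ℝ) : HasDerivAt stdGaussPDF (-t * stdGaussPDF t) t := by
  have h := (((hasDerivAt_pow 2 t).neg.div_const 2).exp).const_mul (√(2 * π))⁻¹
  exact h.congr_deriv (by simp only [stdGaussPDF, Pi.neg_apply]; push_cast; ring)

lemma tendsto_stdGaussPDF_atTop : Tendsto stdGaussPDF atTop (𝓝 0) := by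
  have h : Tendsto (fun t : ℝ => -(t ^ 2) / 2) atTop atBot :=
    (tendsto_neg_atTop_atBot.comp (tendsto_pow_atTop two_ne_zero)).atBot_div_const two_pos
  have h' := (tendsto_exp_atBot.comp h).const_mul (√(2 * π))⁻¹
  rwa [mul_zero] at h'

lemma two_mul_stdGaussPDF_sq (s : ℝ) :
    2 * stdGaussPDF s ^ 2 = √2 * stdGaussPDF (√2 * s) / √π := by
  have hexp : exp (-(s ^ 2) / 2) ^ 2 = exp (-((√2 * s) ^ 2) / 2) := by
    rw [← exp_nat_mul, mul_pow, sq_sqrt zero_le_two]; ring_nf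
  simp only [stdGaussPDF, mul_pow, hexp, inv_pow, sqrt_mul zero_le_two]
  field_simp
  rw [sq_sqrt zero_le_two]

lemma stdGaussCDF_eq_integral_Iic (z : ℝ) : stdGaussCDF z = ∫ t in Iic z, stdGaussPDF t :=
  setIntegral_congr_set Iio_ae_eq_Iic

lemma one_sub_stdGaussCDF (z : ℝ) : 1 - stdGaussCDF z = ∫ t in Ioi z, stdGaussPDF t := by
  rw [← integral_stdGaussPDF, stdGaussCDF_eq_integral_Iic,
    ← intervalIntegral.integral_Iic_add_Ioi integrable_stdGaussPDF.integrableOn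
      integrable_stdGaussPDF.integrableOn, add_sub_cancel_left]

lemma stdGaussCDF_neg (z : ℝ) : stdGaussCDF (-z) = 1 - stdGaussCDF z := by
  rw [one_sub_stdGaussCDF, stdGaussCDF_eq_integral_Iic, ← integral_comp_neg_Ioi]
  simp only [stdGaussPDF_neg]

lemma stdGaussCDF_nonneg (z : ℝ) : 0 ≤ stdGaussCDF z :=
  setIntegral_nonneg measurableSet_Iio fun t _ => stdGaussPDF_nonneg t

lemma stdGaussCDF_le_one (z : ℝ) : stdGaussCDF z ≤ 1 := by
  rw [← sub_nonneg, one_sub_stdGaussCDF]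
  exact setIntegral_nonneg measurableSet_Ioi fun t _ => stdGaussPDF_nonneg t

lemma hasDerivAt_stdGaussCDF (x : ℝ) : HasDerivAt stdGaussCDF (stdGaussPDF x) x := by
  have hΦ : stdGaussCDF = fun u => stdGaussCDF 0 + ∫ t in (0 : ℝ)..u, stdGaussPDF t := by
    ext u
    rw [stdGaussCDF_eq_integral_Iic, stdGaussCDF_eq_integral_Iic,
      ← intervalIntegral.integral_Iic_sub_Iic integrable_stdGaussPDF.integrableOn
        integrable_stdGaussPDF.integrableOn, add_sub_cancel]
  rw [hΦ]
  exact (intervalIntegral.integral_hasDerivAt_right integrable_stdGaussPDF.intervalIntegrable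
    (continuous_stdGaussPDF.stronglyMeasurableAtFilter _ _)
    continuous_stdGaussPDF.continuousAt).const_add _

lemma hasDerivAt_neg_stdGaussPDF (x : ℝ) :
    HasDerivAt (fun t => -stdGaussPDF t) (x * stdGaussPDF x) x :=
  (hasDerivAt_stdGaussPDF x).neg.congr_deriv (by ring)

lemma integral_Ioi_mul_stdGaussPDF {s : ℝ} (hs : 0 ≤ s) :
    ∫ t in Ioi s, t * stdGaussPDF t = stdGaussPDF s := by
  rw [integral_Ioi_of_hasDerivAt_of_nonneg' (fun x _ => hasDerivAt_neg_stdGaussPDF x)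
    (fun x hx => mul_nonneg (hs.trans (le_of_lt hx)) (stdGaussPDF_nonneg x))
    (by simpa using tendsto_stdGaussPDF_atTop.neg), zero_sub, neg_neg]

lemma mul_one_sub_stdGaussCDF_le {s : ℝ} (hs : 0 ≤ s) :
    s * (1 - stdGaussCDF s) ≤ stdGaussPDF s := by
  have hint : IntegrableOn (fun t => t * stdGaussPDF t) (Ioi s) :=
    integrableOn_Ioi_deriv_of_nonneg' (fun x _ => hasDerivAt_neg_stdGaussPDF x)
      (fun x hx => mul_nonneg (hs.trans (le_of_lt hx)) (stdGaussPDF_nonneg x))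
      (by simpa using tendsto_stdGaussPDF_atTop.neg)
  rw [one_sub_stdGaussCDF, ← integral_const_mul, ← integral_Ioi_mul_stdGaussPDF hs]
  exact setIntegral_mono_on (integrable_stdGaussPDF.integrableOn.const_mul s) hint
    measurableSet_Ioi fun t ht => mul_le_mul_of_nonneg_right (le_of_lt ht) (stdGaussPDF_nonneg t)

lemma tendsto_one_sub_stdGaussCDF_atTop : Tendsto (fun s => 1 - stdGaussCDF s) atTop (𝓝 0) := by
  refine tendsto_of_tendsto_of_tendsto_of_le_of_le' tendsto_const_nhds tendsto_stdGaussPDF_atTop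
    (Eventually.of_forall fun s => sub_nonneg.mpr (stdGaussCDF_le_one s)) ?_
  filter_upwards [eventually_ge_atTop 1] with s hs
  nlinarith [mul_one_sub_stdGaussCDF_le (zero_le_one.trans hs), stdGaussCDF_le_one s]

lemma tendsto_mul_one_sub_stdGaussCDF_sq_atTop :
    Tendsto (fun s => s * (1 - stdGaussCDF s) ^ 2) atTop (𝓝 0) := by
  refine tendsto_of_tendsto_of_tendsto_of_le_of_le' tendsto_const_nhds tendsto_stdGaussPDF_atTop
    ?_ ?_ <;> filter_upwards [eventually_ge_atTop 0] with s hs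
  · have := stdGaussCDF_le_one s
    positivity
  · calc s * (1 - stdGaussCDF s) ^ 2 = s * (1 - stdGaussCDF s) * (1 - stdGaussCDF s) := by ring
      _ ≤ stdGaussPDF s * 1 :=
        mul_le_mul (mul_one_sub_stdGaussCDF_le hs) (by linarith [stdGaussCDF_nonneg s])
          (sub_nonneg.mpr (stdGaussCDF_le_one s)) (stdGaussPDF_nonneg s)
      _ = stdGaussPDF s := mul_one _

noncomputable def stdGaussTailSqAntideriv (s : ℝ) : ℝ :=
  s * (1 - stdGaussCDF s) ^ 2 - 2 * (1 - stdGaussCDF s) * stdGaussPDF s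
    + (1 - stdGaussCDF (√2 * s)) / √π

lemma hasDerivAt_stdGaussTailSqAntideriv (s : ℝ) :
    HasDerivAt stdGaussTailSqAntideriv ((1 - stdGaussCDF s) ^ 2) s := by
  have htail : ∀ x, HasDerivAt (fun t => 1 - stdGaussCDF t) (-stdGaussPDF x) x := fun x =>
    (hasDerivAt_stdGaussCDF x).const_sub 1
  have hscaled := (htail (√2 * s)).comp s ((hasDerivAt_id s).const_mul √2)
  have h := (((hasDerivAt_id s).mul ((htail s).pow 2)).sub
    (((htail s).const_mul 2).mul (hasDerivAt_stdGaussPDF s))).add (hscaled.div_const √π)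
  refine h.congr_deriv ?_
  have hsq := two_mul_stdGaussPDF_sq s
  simp only [id_eq, Pi.pow_apply, mul_one] at hsq ⊢
  push_cast
  linear_combination hsq

lemma tendsto_stdGaussTailSqAntideriv_atTop : Tendsto stdGaussTailSqAntideriv atTop (𝓝 0) := by
  have hscaled : Tendsto (fun s => 1 - stdGaussCDF (√2 * s)) atTop (𝓝 0) :=
    tendsto_one_sub_stdGaussCDF_atTop.comp
      (tendsto_id.const_mul_atTop (sqrt_pos.mpr two_pos))
  have h := (tendsto_mul_one_sub_stdGaussCDF_sq_atTop.sub
    ((tendsto_one_sub_stdGaussCDF_atTop.const_mul 2).mul tendsto_stdGaussPDF_atTop)).add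
    (hscaled.div_const √π)
  unfold stdGaussTailSqAntideriv
  simpa using h

lemma integrableOn_Ioi_one_sub_stdGaussCDF_sq (a : ℝ) :
    IntegrableOn (fun s => (1 - stdGaussCDF s) ^ 2) (Ioi a) :=
  integrableOn_Ioi_deriv_of_nonneg' (fun x _ => hasDerivAt_stdGaussTailSqAntideriv x)
    (fun _ _ => sq_nonneg _) tendsto_stdGaussTailSqAntideriv_atTop

lemma integral_Ioi_one_sub_stdGaussCDF_sq (a : ℝ) :
    ∫ s in Ioi a, (1 - stdGaussCDF s) ^ 2 = -stdGaussTailSqAntideriv a := by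
  rw [integral_Ioi_of_hasDerivAt_of_nonneg' (fun x _ => hasDerivAt_stdGaussTailSqAntideriv x)
    (fun _ _ => sq_nonneg _) tendsto_stdGaussTailSqAntideriv_atTop, zero_sub]

lemma stdGaussCDF_sq_eq_one_sub_stdGaussCDF_neg_sq (s : ℝ) :
    stdGaussCDF s ^ 2 = (1 - stdGaussCDF (-s)) ^ 2 := by
  rw [stdGaussCDF_neg, sub_sub_cancel]

lemma integrableOn_Iio_stdGaussCDF_sq (a : ℝ) :
    IntegrableOn (fun s => stdGaussCDF s ^ 2) (Iio a) := by
  simpa only [← stdGaussCDF_sq_eq_one_sub_stdGaussCDF_neg_sq] using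
    (integrableOn_Ioi_one_sub_stdGaussCDF_sq (-a)).comp_neg_Iio

lemma integral_Iio_stdGaussCDF_sq (a : ℝ) :
    ∫ s in Iio a, stdGaussCDF s ^ 2 = -stdGaussTailSqAntideriv (-a) := by
  rw [setIntegral_congr_set Iio_ae_eq_Iic, ← integral_Ioi_one_sub_stdGaussCDF_sq,
    ← integral_comp_neg_Iic]
  simp only [← stdGaussCDF_sq_eq_one_sub_stdGaussCDF_neg_sq]

lemma crps_stdGaussCDF (z : ℝ) :
    crps stdGaussCDF z = 2 * stdGaussPDF z + z * (2 * stdGaussCDF z - 1) - 1 / √π := by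
  rw [crps_eq_integral_Iio_add_integral_Ioi (integrableOn_Iio_stdGaussCDF_sq z)
    (integrableOn_Ioi_one_sub_stdGaussCDF_sq z), integral_Iio_stdGaussCDF_sq,
    integral_Ioi_one_sub_stdGaussCDF_sq, stdGaussTailSqAntideriv, stdGaussTailSqAntideriv,
    mul_neg, stdGaussCDF_neg, stdGaussCDF_neg, stdGaussPDF_neg]
  ring

theorem crps_gaussian_closed_form (μ σ y : ℝ) (hσ : 0 < σ) :
    (∫ t : ℝ, (stdGaussCDF ((t - μ) / σ) - (if y ≤ t then (1 : ℝ) else 0)) ^ 2) =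
      σ * (2 * stdGaussPDF ((y - μ) / σ) +
        ((y - μ) / σ) * (2 * stdGaussCDF ((y - μ) / σ) - 1) - 1 / Real.sqrt Real.pi) :=
  (crps_comp_affine stdGaussCDF μ y hσ).trans (by rw [crps_stdGaussCDF])
end

section
/- Let H be a concave function on a convex set of probability measures with supergradients h_P (so H(Q) ≤ H(P) + ⟨h_P, Q − P⟩ for all P, Q), and define d(P, Q) = H(P) − H(Q) − ⟨h_P, P − Q⟩. Then for distributions P_1,…,P_M with mixture P_ens = (1/M)∑ P_i, the identity (1/M²)∑_{i,j} d(P_i, P_j) = (1/M)∑_i d(P_ens, P_i) + (1/M)∑_i d(P_i, P_ens) holds, i.e., R_Exc^{1,1} = R_Exc^{2,1} + R_Exc^{1,2}. -/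
open MeasureTheory Finset

theorem excess_risk_splitting {α : Type*} [MeasurableSpace α]
    (H : Measure α → ℝ) (h : Measure α → α → ℝ)
    (hsuper : ∀ P Q : Measure α, IsProbabilityMeasure P → IsProbabilityMeasure Q →
      H Q ≤ H P + ((∫ x, h P x ∂Q) - (∫ x, h P x ∂P)))
    (d : Measure α → Measure α → ℝ)
    (hd : ∀ P Q : Measure α, d P Q = H P - H Q - ((∫ x, h P x ∂P) - (∫ x, h P x ∂Q)))
    (M : ℕ) (hM : 0 < M) (P : Fin M → Measure α)
    (hP : ∀ i, IsProbabilityMeasure (P i))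
    (Pens : Measure α) (hPens : Pens = ((M : ENNReal))⁻¹ • ∑ i : Fin M, P i)
    (hint1 : ∀ i j, Integrable (h (P i)) (P j))
    (hint2 : ∀ i, Integrable (h Pens) (P i)) :
    (1 / (M : ℝ) ^ 2) * ∑ i : Fin M, ∑ j : Fin M, d (P i) (P j) =
      (1 / (M : ℝ)) * (∑ i : Fin M, d Pens (P i))
        + (1 / (M : ℝ)) * (∑ i : Fin M, d (P i) Pens) := by
  have hMR : (M : ℝ) ≠ 0 := Nat.cast_ne_zero.mpr hM.ne'
  have key : ∀ f : α → ℝ, (∀ i, Integrable f (P i)) →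
      ∫ x, f x ∂Pens = (M : ℝ)⁻¹ * ∑ i : Fin M, ∫ x, f x ∂(P i) := by
    intro f hf
    rw [hPens, integral_smul_measure,
      MeasureTheory.integral_finset_sum_measure (fun i _ => hf i)]
    simp [ENNReal.toReal_inv, smul_eq_mul]
  have h1 : ∀ i, ∫ x, h (P i) x ∂Pens = (M : ℝ)⁻¹ * ∑ j : Fin M, ∫ x, h (P i) x ∂(P j) :=
    fun i => key _ (hint1 i)
  have h2 : ∫ x, h Pens x ∂Pens = (M : ℝ)⁻¹ * ∑ j : Fin M, ∫ x, h Pens x ∂(P j) :=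
    key _ hint2
  simp only [hd, h1, h2]
  simp only [Finset.sum_sub_distrib, Finset.sum_add_distrib, Finset.sum_const,
    card_univ, Fintype.card_fin, nsmul_eq_mul, ← Finset.mul_sum]
  field_simp
  ring
end
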